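/- arXiv:1612.00211 — 2 statements merged into one kernel-verified Lean document; each statement's English description precedes it below -/
import Mathlib

section
/- For independent events A_1, ..., A_M, the probability of their union is at least (1/2)·min{1, Σᵢ P[Aᵢ]}. -/
open MeasureTheory ProbabilityTheory
open scoped ENNReal

lemma prod_one_sub_mul_aux {ι : Type*} (s : Finset ι) (p : ι → ℝ)
    (h0 : ∀ i, 0 ≤ p i) (h1 : ∀ i, p i ≤ 1) :
    (∏ i ∈ s, (1 - p i)) * (1 + ∑ i ∈ s, p i) ≤ 1 := by
  classical
  induction s using Finset.induction_on with
  | empty => simp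
  | insert _ _ ha ih =>
    rename_i a t
    rw [Finset.prod_insert ha, Finset.sum_insert ha]
    have hP : 0 ≤ ∏ i ∈ t, (1 - p i) :=
      Finset.prod_nonneg fun i _ => by linarith [h1 i]
    have hs : 0 ≤ ∑ i ∈ t, p i := Finset.sum_nonneg fun i _ => h0 i
    nlinarith [h0 a, h1 a, mul_nonneg hP hs, mul_nonneg (mul_nonneg hP (h0 a)) (h0 a),
      mul_nonneg (mul_nonneg hP (h0 a)) hs]

/-- For mutually independent events `A 1, ..., A M`, the probability of their union
is at least `(1/2) * min 1 (∑ i, P[A i])`. -/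
theorem truncated_union_bound_lower {Ω : Type*} [MeasurableSpace Ω]
    (μ : Measure Ω) [IsProbabilityMeasure μ] {M : ℕ} (A : Fin M → Set Ω)
    (hmeas : ∀ i, MeasurableSet (A i))
    (hindep : iIndepSet A μ) :
    (1 / 2 : ℝ≥0∞) * min 1 (∑ i, μ (A i)) ≤ μ (⋃ i, A i) := by
  have hU : MeasurableSet (⋃ i, A i) := MeasurableSet.iUnion hmeas
  have hprod : μ (⋂ i, (A i)ᶜ) = ∏ i, μ ((A i)ᶜ) := by
    refine ((iIndepSet_iff_iIndep _ _).1 hindep).meas_iInter fun i => ?_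
    exact MeasurableSet.compl (MeasurableSpace.measurableSet_generateFrom (Set.mem_singleton (A i)))
  have hcap : μ (⋂ i, (A i)ᶜ) = 1 - μ (⋃ i, A i) := by
    rw [← Set.compl_iUnion, measure_compl hU (measure_ne_top μ _), measure_univ]
  have hUeq : μ (⋃ i, A i) = 1 - ∏ i, μ ((A i)ᶜ) := by
    rw [← hprod, hcap, ENNReal.sub_sub_cancel ENNReal.one_ne_top prob_le_one]
  set p : Fin M → ℝ := fun i => (μ (A i)).toReal with hp
  have hp0 : ∀ i, 0 ≤ p i := fun i => ENNReal.toReal_nonneg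
  have hp1 : ∀ i, p i ≤ 1 := fun i => by
    simpa using ENNReal.toReal_mono ENNReal.one_ne_top (prob_le_one (μ := μ) (s := A i))
  have hcomplR : ∀ i, (μ ((A i)ᶜ)).toReal = 1 - p i := fun i => by
    rw [measure_compl (hmeas i) (measure_ne_top μ _), measure_univ,
      ENNReal.toReal_sub_of_le prob_le_one ENNReal.one_ne_top, ENNReal.toReal_one]
  -- reduce to real inequality
  have hfin1 : (1 / 2 : ℝ≥0∞) * min 1 (∑ i, μ (A i)) ≠ ∞ := by
    refine ENNReal.mul_ne_top (by simp) ?_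
    exact ne_top_of_le_ne_top ENNReal.one_ne_top (min_le_left _ _)
  rw [← ENNReal.toReal_le_toReal hfin1 (measure_ne_top μ _)]
  have hsum : (∑ i, μ (A i)).toReal = ∑ i, p i := by
    rw [ENNReal.toReal_sum fun i _ => measure_ne_top μ _]
  have hmin : (min 1 (∑ i, μ (A i))).toReal = min 1 (∑ i, p i) := by
    rcases le_total (1 : ℝ≥0∞) (∑ i, μ (A i)) with h | h
    · rw [min_eq_left h, min_eq_left]
      · simp
      · calc (1:ℝ) = (1:ℝ≥0∞).toReal := by simp
          _ ≤ _ := by rw [← hsum]; exact ENNReal.toReal_mono (by simp [ENNReal.sum_lt_top, measure_ne_top]) h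
    · rw [min_eq_right h, min_eq_right, hsum]
      rw [← hsum]
      calc (∑ i, μ (A i)).toReal ≤ (1:ℝ≥0∞).toReal :=
            ENNReal.toReal_mono ENNReal.one_ne_top h
        _ = 1 := by simp
  rw [ENNReal.toReal_mul, hmin, hUeq,
    ENNReal.toReal_sub_of_le (Finset.prod_le_one (fun _ _ => zero_le) fun i _ => prob_le_one)
      ENNReal.one_ne_top,
    ENNReal.toReal_prod, ENNReal.toReal_one]
  simp only [hcomplR]
  have key := prod_one_sub_mul_aux Finset.univ p hp0 hp1
  have hP : 0 ≤ ∏ i, (1 - p i) := Finset.prod_nonneg fun i _ => by linarith [hp1 i]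
  have hs0 : 0 ≤ ∑ i, p i := Finset.sum_nonneg fun i _ => hp0 i
  have h12 : ((1:ℝ≥0∞)/2).toReal = 1/2 := by
    rw [ENNReal.toReal_div]; simp
  rw [h12]
  rcases le_total (∑ i, p i) 1 with h | h
  · rw [min_eq_right h]
    nlinarith [mul_nonneg hP hs0]
  · rw [min_eq_left h]
    nlinarith [mul_nonneg hP hs0]
end

section
/- For the two-step successive decoder with metric equal to the true channel (q = W), and for any fixed pair of codebooks, the error probability under maximum-likelihood decoding (with ties broken as errors) is at least half the error probability under the genie-aided successive decoder, where the genie-aided decoder uses the true first message in its second step. -/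
open Finset
open scoped Classical

noncomputable def indR (P : Prop) : ℝ := if P then 1 else 0

lemma ite_eq_indR (P : Prop) {h : Decidable P} : (@ite ℝ P h 1 0) = indR P := by
  by_cases hp : P <;> simp [indR, hp]

lemma indR_nonneg (P : Prop) : 0 ≤ indR P := by
  unfold indR; split_ifs <;> norm_num

lemma indR_of_true {P : Prop} (h : P) : indR P = 1 := by unfold indR; exact if_pos h

lemma indR_of_false {P : Prop} (h : ¬ P) : indR P = 0 := by unfold indR; exact if_neg h

lemma genie_le_two_ml {M₁ M₂ : ℕ} (a : Fin M₁ → Fin M₂ → ℝ) (ha : ∀ i j, 0 ≤ a i j) :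
    (∑ i, ∑ j, a i j * indR (¬ ((∀ i', i' ≠ i → ∑ j', a i' j' < ∑ j', a i j') ∧
        (∀ j', j' ≠ j → a i j' < a i j))))
    ≤ 2 * ∑ i, ∑ j, a i j *
        indR (¬ ∀ p : Fin M₁ × Fin M₂, p ≠ (i, j) → a p.1 p.2 < a i j) := by
  classical
  set g : Fin M₁ → Fin M₂ → Prop := fun i j =>
    (∀ i', i' ≠ i → ∑ j', a i' j' < ∑ j', a i j') ∧ (∀ j', j' ≠ j → a i j' < a i j) with hg_def
  set m : Fin M₁ → Fin M₂ → Prop := fun i j =>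
    ∀ p : Fin M₁ × Fin M₂, p ≠ (i, j) → a p.1 p.2 < a i j with hm_def
  have expand : ∀ P : Fin M₁ → Fin M₂ → Prop,
      (∑ i, ∑ j, a i j * indR (¬ P i j))
        = (∑ i, ∑ j, a i j) - ∑ i, ∑ j, a i j * indR (P i j) := by
    intro P
    have h : ∀ i j, a i j * indR (¬ P i j) = a i j - a i j * indR (P i j) := by
      intro i j; by_cases h : P i j
      · rw [indR_of_true h, indR_of_false (not_not_intro h)]; ring
      · rw [indR_of_false h, indR_of_true h]; ring
    simp_rw [h, Finset.sum_sub_distrib]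
  have e1 := expand g
  have e2 := expand m
  set T : ℝ := ∑ i, ∑ j, a i j with hT
  set G : ℝ := ∑ i, ∑ j, a i j * indR (g i j) with hG
  set M : ℝ := ∑ i, ∑ j, a i j * indR (m i j) with hM
  have hnn : ∀ (P : Fin M₁ → Fin M₂ → Prop) (i : Fin M₁) (j : Fin M₂),
      0 ≤ a i j * indR (P i j) := fun P i j => mul_nonneg (ha i j) (indR_nonneg _)
  have hT0 : 0 ≤ T := Finset.sum_nonneg fun i _ => Finset.sum_nonneg fun j _ => ha i j
  have hG0 : 0 ≤ G :=
    Finset.sum_nonneg fun i _ => Finset.sum_nonneg fun j _ => hnn g i j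
  have h2M : 2 * M ≤ T + G := by
    by_cases hm : ∃ p : Fin M₁ × Fin M₂, m p.1 p.2
    · obtain ⟨⟨is, js⟩, hstar⟩ := hm
      have hm_unique : ∀ i j, m i j → (i, j) = (is, js) := by
        intro i j h
        by_contra hne
        have h1 : a is js < a i j := h (is, js) fun h' => hne (by
          rw [Prod.mk.injEq] at h' ⊢
          exact ⟨h'.1.symm, h'.2.symm⟩)
        have h2 : a i j < a is js := hstar (i, j) hne
        linarith
      have hterm : ∀ i j, a i j * indR (m i j)
          = if (i, j) = (is, js) then a is js else 0 := by
        intro i j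
        by_cases h : m i j
        · have he := hm_unique i j h
          rw [indR_of_true h, if_pos he, mul_one]
          rw [Prod.mk.injEq] at he
          rw [he.1, he.2]
        · rw [indR_of_false h, mul_zero, if_neg]
          intro he
          rw [Prod.mk.injEq] at he
          obtain ⟨h1, h2⟩ := he
          subst h1; subst h2
          exact h hstar
      have hMval : M = a is js := by
        rw [hM]
        simp_rw [hterm, Prod.mk.injEq, ite_and]
        rw [Finset.sum_eq_single is]
        · simp
        · intro i _ hi
          exact Finset.sum_eq_zero fun j _ => by rw [if_neg hi]
        · intro h; exact absurd (Finset.mem_univ is) h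
      have haS : a is js ≤ ∑ j, a is j :=
        Finset.single_le_sum (fun j _ => ha is j) (Finset.mem_univ js)
      have hST : (∑ j, a is j) ≤ T :=
        Finset.single_le_sum (f := fun i => ∑ j, a i j)
          (fun i _ => Finset.sum_nonneg fun j _ => ha i j) (Finset.mem_univ is)
      by_cases hg : g is js
      · have h1 : a is js ≤ ∑ j, a is j * indR (g is j) := by
          have h0 : a is js = a is js * indR (g is js) := by
            rw [indR_of_true hg, mul_one]
          rw [h0]
          exact Finset.single_le_sum (f := fun j => a is j * indR (g is j))
            (fun j _ => hnn g is j) (Finset.mem_univ js)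
        have h2 : (∑ j, a is j * indR (g is j)) ≤ G :=
          Finset.single_le_sum (f := fun i => ∑ j, a i j * indR (g i j))
            (fun i _ => Finset.sum_nonneg fun j _ => hnn g i j) (Finset.mem_univ is)
        rw [hMval]; linarith
      · have hB : ∀ j', j' ≠ js → a is j' < a is js := fun j' hj' =>
          hstar (is, j') (by simp [hj'])
        have hA : ¬ ∀ i', i' ≠ is → ∑ j', a i' j' < ∑ j', a is j' := fun hA =>
          hg ⟨hA, hB⟩
        push_neg at hA
        obtain ⟨i₁, hi₁ne, hi₁ge⟩ := hA
        have hpair : (∑ j, a i₁ j) + ∑ j, a is j ≤ T := by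
          have hsub := Finset.sum_le_sum_of_subset_of_nonneg (f := fun i => ∑ j, a i j)
            (Finset.subset_univ ({i₁, is} : Finset (Fin M₁)))
            (fun i _ _ => Finset.sum_nonneg fun j _ => ha i j)
          rwa [Finset.sum_pair hi₁ne] at hsub
        rw [hMval]; linarith
    · push_neg at hm
      have hM0 : M = 0 := by
        rw [hM]
        refine Finset.sum_eq_zero fun i _ => Finset.sum_eq_zero fun j _ => ?_
        rw [indR_of_false (hm (i, j)), mul_zero]
      rw [hM0]; linarith
  linarith [e1, e2]

/-- With the true channel as metric (`q = W`) and fixed codebooks, the error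
probability of maximum-likelihood decoding (ties broken as errors) is at least half
the error probability of the genie-aided successive decoder, which uses the true
first message in its second step. -/
theorem ml_error_ge_half_genie_error
    {X₁ X₂ Y : Type*} [Fintype X₁] [Fintype X₂] [Fintype Y]
    (n M₁ M₂ : ℕ) (hM₁ : 1 ≤ M₁) (hM₂ : 1 ≤ M₂)
    (W : X₁ → X₂ → Y → ℝ) (hWpos : ∀ x₁ x₂ y, 0 ≤ W x₁ x₂ y)
    (hWsum : ∀ x₁ x₂, ∑ y, W x₁ x₂ y = 1)
    (C₁ : Fin M₁ → Fin n → X₁) (C₂ : Fin M₂ → Fin n → X₂) :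
    -- n-fold product channel value for message pair (i,j) and output y⃗
    let Wn : Fin M₁ → Fin M₂ → (Fin n → Y) → ℝ :=
      fun i j y => ∏ k, W (C₁ i k) (C₂ j k) (y k)
    -- ML decoder (ties as errors): correct iff (i,j) strictly dominates
    let mlErr : Fin M₁ → Fin M₂ → (Fin n → Y) → Prop :=
      fun i j y => ¬ ∀ p : Fin M₁ × Fin M₂, p ≠ (i, j) → Wn p.1 p.2 y < Wn i j y
    -- genie-aided successive decoder (ties as errors)
    let genieErr : Fin M₁ → Fin M₂ → (Fin n → Y) → Prop :=
      fun i j y => ¬ ((∀ i', i' ≠ i → ∑ j', Wn i' j' y < ∑ j', Wn i j' y) ∧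
        (∀ j', j' ≠ j → Wn i j' y < Wn i j y))
    (1 / 2 : ℝ) * ((1 / ((M₁ : ℝ) * M₂)) * ∑ i, ∑ j, ∑ y : Fin n → Y,
        Wn i j y * (if genieErr i j y then 1 else 0))
      ≤ (1 / ((M₁ : ℝ) * M₂)) * ∑ i, ∑ j, ∑ y : Fin n → Y,
        Wn i j y * (if mlErr i j y then 1 else 0) := by
  intro Wn mlErr genieErr
  have hc : (0:ℝ) ≤ 1 / ((M₁ : ℝ) * M₂) := by positivity
  simp only [ite_eq_indR]
  have hWn : ∀ i j (y : Fin n → Y), 0 ≤ Wn i j y := fun i j y =>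
    Finset.prod_nonneg fun k _ => hWpos _ _ _
  have key : ∀ y : Fin n → Y,
      (∑ i, ∑ j, Wn i j y * indR (genieErr i j y))
        ≤ 2 * ∑ i, ∑ j, Wn i j y * indR (mlErr i j y) :=
    fun y => genie_le_two_ml (fun i j => Wn i j y) (fun i j => hWn i j y)
  have swap : ∀ f : Fin M₁ → Fin M₂ → (Fin n → Y) → ℝ,
      (∑ i, ∑ j, ∑ y : Fin n → Y, f i j y) = ∑ y : Fin n → Y, ∑ i, ∑ j, f i j y := by
    intro f
    rw [show (∑ i, ∑ j, ∑ y : Fin n → Y, f i j y)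
        = ∑ i, ∑ y : Fin n → Y, ∑ j, f i j y from
      Finset.sum_congr rfl fun i _ => Finset.sum_comm]
    exact Finset.sum_comm
  have hAB : (∑ i, ∑ j, ∑ y : Fin n → Y, Wn i j y * indR (genieErr i j y))
      ≤ 2 * ∑ i, ∑ j, ∑ y : Fin n → Y, Wn i j y * indR (mlErr i j y) := by
    rw [swap (fun i j y => Wn i j y * indR (genieErr i j y)),
      swap (fun i j y => Wn i j y * indR (mlErr i j y)), Finset.mul_sum]
    exact Finset.sum_le_sum fun y _ => key y
  calc (1 / 2 : ℝ) * ((1 / ((M₁ : ℝ) * M₂)) * ∑ i, ∑ j, ∑ y : Fin n → Y,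
        Wn i j y * indR (genieErr i j y))
      ≤ (1 / 2 : ℝ) * ((1 / ((M₁ : ℝ) * M₂)) * (2 * ∑ i, ∑ j, ∑ y : Fin n → Y,
        Wn i j y * indR (mlErr i j y))) := by
        apply mul_le_mul_of_nonneg_left (mul_le_mul_of_nonneg_left hAB hc) (by norm_num)
    _ = (1 / ((M₁ : ℝ) * M₂)) * ∑ i, ∑ j, ∑ y : Fin n → Y,
        Wn i j y * indR (mlErr i j y) := by ring
end
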